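/- arXiv:1305.0710 — 3 statements merged into one kernel-verified Lean document; each statement's English description precedes it below -/
import Mathlib

section
/- The formulas Δ(K) = K ⊗ K, Δ(K^{-1}) = K^{-1} ⊗ K^{-1}, Δ(E) = E ⊗ 1 + K ⊗ E, Δ(F) = 1 ⊗ F + F ⊗ K^{-1} extend uniquely to a superalgebra homomorphism Δ: U → U ⊗ U, where the multiplication on U ⊗ U is the super (graded) multiplication (x⊗y)(x'⊗y') = t^{2 p(y) p(x')} x x' ⊗ y y'. -/
/-!
By the presentation of `U`, a homomorphism `Δ` with the given values exists as soon as the four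
proposed images satisfy the defining relations of `U` inside `U ⊗ U`, and it is unique because
`E, F, K, K⁻¹` generate `U`. The relations are checked with the super sign rule, using `t⁴ = 1`
and the derived commutation `K⁻¹E = (t²/v²) EK⁻¹`.
-/

noncomputable section

/-- The defining relations of the quantum superalgebra `U` of `osp(1|2)`:
generators `E = ι 0`, `F = ι 1`, `K = ι 2`, `K⁻¹ = ι 3`, with
`KK⁻¹ = K⁻¹K = 1`, `KE = v²t⁻² EK`, `KF = v⁻²t² FK`,
`EF − t² FE = (K − K⁻¹)/(v − v⁻¹)`. -/
inductive URel (F : Type) [Field F] (v t : F) :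
    FreeAlgebra F (Fin 4) → FreeAlgebra F (Fin 4) → Prop
  | KKinv : URel F v t (FreeAlgebra.ι F (2 : Fin 4) * FreeAlgebra.ι F (3 : Fin 4)) 1
  | KinvK : URel F v t (FreeAlgebra.ι F (3 : Fin 4) * FreeAlgebra.ι F (2 : Fin 4)) 1
  | KE : URel F v t (FreeAlgebra.ι F (2 : Fin 4) * FreeAlgebra.ι F (0 : Fin 4))
      ((v ^ 2 / t ^ 2) • (FreeAlgebra.ι F (0 : Fin 4) * FreeAlgebra.ι F (2 : Fin 4)))
  | KF : URel F v t (FreeAlgebra.ι F (2 : Fin 4) * FreeAlgebra.ι F (1 : Fin 4))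
      ((t ^ 2 / v ^ 2) • (FreeAlgebra.ι F (1 : Fin 4) * FreeAlgebra.ι F (2 : Fin 4)))
  | EF : URel F v t (FreeAlgebra.ι F (0 : Fin 4) * FreeAlgebra.ι F (1 : Fin 4)
        - t ^ 2 • (FreeAlgebra.ι F (1 : Fin 4) * FreeAlgebra.ι F (0 : Fin 4)))
      ((v - v⁻¹)⁻¹ • (FreeAlgebra.ι F (2 : Fin 4) - FreeAlgebra.ι F (3 : Fin 4)))

/-- The quantum superalgebra `U` of `osp(1|2)`, presented by generators and relations. -/
abbrev Uosp (F : Type) [Field F] (v t : F) := RingQuot (URel F v t)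

/-- The generator `E` of `U`. -/
def UE (F : Type) [Field F] (v t : F) : Uosp F v t :=
  RingQuot.mkAlgHom F (URel F v t) (FreeAlgebra.ι F (0 : Fin 4))

/-- The generator `F` of `U`. -/
def UF (F : Type) [Field F] (v t : F) : Uosp F v t :=
  RingQuot.mkAlgHom F (URel F v t) (FreeAlgebra.ι F (1 : Fin 4))

/-- The generator `K` of `U`. -/
def UK (F : Type) [Field F] (v t : F) : Uosp F v t :=
  RingQuot.mkAlgHom F (URel F v t) (FreeAlgebra.ι F (2 : Fin 4))

/-- The generator `K⁻¹` of `U`. -/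
def UKinv (F : Type) [Field F] (v t : F) : Uosp F v t :=
  RingQuot.mkAlgHom F (URel F v t) (FreeAlgebra.ι F (3 : Fin 4))


structure UospRelations {F : Type} [Field F] (v t : F) {A : Type} [Ring A] [Algebra F A]
    (e f k k' : A) : Prop where
  k_mul_k' : k * k' = 1
  k'_mul_k : k' * k = 1
  k_mul_e : k * e = (v ^ 2 / t ^ 2) • (e * k)
  k_mul_f : k * f = (t ^ 2 / v ^ 2) • (f * k)
  e_mul_f_sub : e * f - t ^ 2 • (f * e) = (v - v⁻¹)⁻¹ • (k - k')

namespace UospRelations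

variable {F : Type} [Field F] {v t : F} {A : Type} [Ring A] [Algebra F A] {e f k k' : A}

theorem e_mul_k' (h : UospRelations v t e f k k') : e * k' = (v ^ 2 / t ^ 2) • (k' * e) :=
  calc e * k' = k' * (k * e) * k' := by rw [← mul_assoc, h.k'_mul_k, one_mul]
    _ = (v ^ 2 / t ^ 2) • (k' * e) := by
      rw [h.k_mul_e, mul_smul_comm, smul_mul_assoc, ← mul_assoc, mul_assoc, h.k_mul_k', mul_one]

theorem k'_mul_e (h : UospRelations v t e f k k') (hv : v ≠ 0) (ht : t ^ 2 ≠ 0) :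
    k' * e = (t ^ 2 / v ^ 2) • (e * k') := by
  rw [h.e_mul_k', smul_smul, div_mul_div_comm, mul_comm (t ^ 2),
    div_self (mul_ne_zero (pow_ne_zero 2 hv) ht), one_smul]

theorem e_mul_f (h : UospRelations v t e f k k') :
    e * f = t ^ 2 • (f * e) + (v - v⁻¹)⁻¹ • (k - k') := by
  rw [← h.e_mul_f_sub, add_sub_cancel]

end UospRelations

namespace Uosp

variable {F : Type} [Field F] {v t : F}

theorem generators_relations :
    UospRelations v t (UE F v t) (UF F v t) (UK F v t) (UKinv F v t) where
  k_mul_k' := by simpa [UK, UKinv] using RingQuot.mkAlgHom_rel F (URel.KKinv (v := v) (t := t))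
  k'_mul_k := by simpa [UK, UKinv] using RingQuot.mkAlgHom_rel F (URel.KinvK (v := v) (t := t))
  k_mul_e := by simpa [UK, UE] using RingQuot.mkAlgHom_rel F (URel.KE (v := v) (t := t))
  k_mul_f := by simpa [UK, UF] using RingQuot.mkAlgHom_rel F (URel.KF (v := v) (t := t))
  e_mul_f_sub := by
    simpa [UE, UF, UK, UKinv] using RingQuot.mkAlgHom_rel F (URel.EF (v := v) (t := t))

variable {A : Type} [Ring A] [Algebra F A] {e f k k' : A}

def lift (h : UospRelations v t e f k k') : Uosp F v t →ₐ[F] A :=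
  RingQuot.liftAlgHom F ⟨FreeAlgebra.lift F ![e, f, k, k'], fun x y hxy => by
    induction hxy <;> simp [h.k_mul_k', h.k'_mul_k, h.k_mul_e, h.k_mul_f, h.e_mul_f_sub]⟩

theorem lift_generators (h : UospRelations v t e f k k') :
    lift h (UE F v t) = e ∧ lift h (UF F v t) = f ∧ lift h (UK F v t) = k ∧
      lift h (UKinv F v t) = k' := by
  simp [lift, UE, UF, UK, UKinv]

theorem algHom_ext {φ ψ : Uosp F v t →ₐ[F] A} (hE : φ (UE F v t) = ψ (UE F v t))
    (hF : φ (UF F v t) = ψ (UF F v t)) (hK : φ (UK F v t) = ψ (UK F v t))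
    (hKinv : φ (UKinv F v t) = ψ (UKinv F v t)) : φ = ψ := by
  refine RingQuot.ringQuot_ext' F _ _ (FreeAlgebra.hom_ext (funext fun i => ?_))
  fin_cases i <;> assumption

end Uosp

/-- The super sign rule `(x ⊗ y)(x' ⊗ y') = t ^ (2 p(y) p(x')) xx' ⊗ yy'` for a multiplication
`tmul` on `A ⊗ A`, where `x` has parity `a` when `σ x = (-1) ^ a • x`. -/
structure IsSuperTensor {F : Type} [Field F] (t : F) {A : Type} [Ring A] [Algebra F A]
    (σ : A →ₐ[F] A) {T : Type} [Ring T] [Algebra F T] (tmul : A →ₗ[F] A →ₗ[F] T) :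
    Prop where
  tmul_one_one : tmul 1 1 = 1
  tmul_mul_tmul : ∀ (x x' y y' : A) (a b : ℕ),
    σ y = ((-1 : F) ^ a) • y → σ x' = ((-1 : F) ^ b) • x' →
    tmul x y * tmul x' y' = (t ^ (2 * (a * b))) • tmul (x * x') (y * y')

namespace IsSuperTensor

variable {F : Type} [Field F] {v t : F} {A : Type} [Ring A] [Algebra F A] {σ : A →ₐ[F] A}
  {T : Type} [Ring T] [Algebra F T] {tmul : A →ₗ[F] A →ₗ[F] T} {e f k k' : A}

theorem comul_relations (hT : IsSuperTensor t σ tmul) (ht : t ^ 2 = -1) (hv : v ≠ 0)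
    (h : UospRelations v t e f k k')
    (hσe : σ e = -e) (hσf : σ f = -f) (hσk : σ k = k) (hσk' : σ k' = k') :
    UospRelations v t (tmul e 1 + tmul k e) (tmul 1 f + tmul f k') (tmul k k) (tmul k' k') := by
  have p1 : σ 1 = (-1 : F) ^ 0 • (1 : A) := by simp
  have pe : σ e = (-1 : F) ^ 1 • e := by simp [hσe]
  have pf : σ f = (-1 : F) ^ 1 • f := by simp [hσf]
  have pk : σ k = (-1 : F) ^ 0 • k := by simp [hσk]
  have pk' : σ k' = (-1 : F) ^ 0 • k' := by simp [hσk']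
  have rule := hT.tmul_mul_tmul
  constructor
  · rw [rule _ _ _ _ 0 0 pk pk', h.k_mul_k', hT.tmul_one_one]; simp
  · rw [rule _ _ _ _ 0 0 pk' pk, h.k'_mul_k, hT.tmul_one_one]; simp
  · rw [mul_add, add_mul, rule _ _ _ _ 0 1 pk pe, rule _ _ _ _ 0 0 pk pk,
      rule _ _ _ _ 0 0 p1 pk, rule _ _ _ _ 1 0 pe pk, h.k_mul_e]
    simp [smul_add]
  · rw [mul_add, add_mul, rule _ _ _ _ 0 0 pk p1, rule _ _ _ _ 0 1 pk pf,
      rule _ _ _ _ 1 0 pf pk, rule _ _ _ _ 0 0 pk' pk, h.k_mul_f, h.k_mul_k', h.k'_mul_k]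
    simp [smul_add]
  · -- The two `e ⊗ f` terms cancel since `t ^ 4 = 1`; the `fk ⊗ ek'` terms cancel by the
    -- commutation of `k` with `f` and of `k'` with `e`.
    have ht0 : t ^ 2 ≠ 0 := by simp [ht]
    rw [mul_add, add_mul, add_mul, mul_add, add_mul, add_mul,
      rule _ _ _ _ 0 0 p1 p1, rule _ _ _ _ 0 1 p1 pf, rule _ _ _ _ 1 0 pe p1,
      rule _ _ _ _ 1 1 pe pf, rule _ _ _ _ 1 1 pf pe, rule _ _ _ _ 1 0 pf pk,
      rule _ _ _ _ 0 1 pk' pe, rule _ _ _ _ 0 0 pk' pk,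
      h.e_mul_f, h.k_mul_f, h.k'_mul_e hv ht0]
    simp only [mul_one, one_mul, map_smul, map_add, map_sub, LinearMap.smul_apply,
      LinearMap.add_apply, LinearMap.sub_apply, smul_add, smul_sub, smul_smul,
      pow_zero, mul_zero, one_smul]
    rw [ht]
    module

end IsSuperTensor

/-- the formulas `Δ(K) = K ⊗ K`, `Δ(K⁻¹) = K⁻¹ ⊗ K⁻¹`,
`Δ(E) = E ⊗ 1 + K ⊗ E`, `Δ(F) = 1 ⊗ F + F ⊗ K⁻¹` extend uniquely to a superalgebra
homomorphism `Δ : U → U ⊗ U`, where `U ⊗ U` carries the super multiplication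
`(x⊗y)(x'⊗y') = t^(2 p(y) p(x')) xx' ⊗ yy'` for homogeneous elements.  Here the super
tensor product is modelled by an algebra `T` with a bilinear map `tmul` (playing the role
of `⊗`) satisfying that rule, where homogeneity of parity `a` is expressed through the
parity involution `σ` of `U` (the algebra automorphism with `σE = −E`, `σF = −F`,
`σK^{±1} = K^{±1}`): an element `x` is homogeneous of parity `a` iff `σ x = (−1)^a • x`. -/
theorem comultiplication_exists_unique (F : Type) [Field F] (v t : F)
    (ht : t ^ 2 = -1) (hv : v ≠ 0)
    (T : Type) [Ring T] [Algebra F T]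
    (tmul : Uosp F v t →ₗ[F] Uosp F v t →ₗ[F] T)
    (σ : Uosp F v t →ₐ[F] Uosp F v t)
    (hσE : σ (UE F v t) = - UE F v t) (hσF : σ (UF F v t) = - UF F v t)
    (hσK : σ (UK F v t) = UK F v t) (hσKinv : σ (UKinv F v t) = UKinv F v t)
    (hone : tmul 1 1 = 1)
    (hmul : ∀ (x x' y y' : Uosp F v t) (a b : ℕ),
      σ y = ((-1 : F) ^ a) • y → σ x' = ((-1 : F) ^ b) • x' →
      tmul x y * tmul x' y' = (t ^ (2 * (a * b))) • tmul (x * x') (y * y')) :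
    ∃! Δ : Uosp F v t →ₐ[F] T,
      Δ (UK F v t) = tmul (UK F v t) (UK F v t) ∧
      Δ (UKinv F v t) = tmul (UKinv F v t) (UKinv F v t) ∧
      Δ (UE F v t) = tmul (UE F v t) 1 + tmul (UK F v t) (UE F v t) ∧
      Δ (UF F v t) = tmul 1 (UF F v t) + tmul (UF F v t) (UKinv F v t) := by
  have hΔ := IsSuperTensor.comul_relations ⟨hone, hmul⟩ ht hv Uosp.generators_relations
    hσE hσF hσK hσKinv
  obtain ⟨hE, hF, hK, hKinv⟩ := Uosp.lift_generators hΔ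
  refine ⟨Uosp.lift hΔ, ⟨hK, hKinv, hE, hF⟩, ?_⟩
  rintro Δ ⟨hK', hKinv', hE', hF'⟩
  exact Uosp.algHom_ext (hE'.trans hE.symm) (hF'.trans hF.symm) (hK'.trans hK.symm)
    (hKinv'.trans hKinv.symm)
end
end

section
/- For every d ∈ ℕ, the (d+1)-dimensional vector space with basis ξ_0, …, ξ_d becomes a U-module (the module Λ_d^-) under F·ξ_r = t^r [r+1]_v ξ_{r+1}, E·ξ_r = −t^{r-1} [d+1-r]_v ξ_{r-1}, K·ξ_r = −t^{2r} v^{d-2r} ξ_r (with ξ_{-1} = ξ_{d+1} = 0); i.e., these operators satisfy the defining relations of U. -/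
/-!
`K` is diagonal, `E` lives on the superdiagonal and `F` on the subdiagonal. Consecutive
eigenvalues of `K` differ by the factor `t² / v²`, which gives the relations between `K` and
`E`, `F`. Both `EF` and `FE` are diagonal, and on `ξ_n` the operator `EF - t² FE` acts by
`-t^(2n) ([n+1][d-n] - [n][d-n+1])`; the quantum-integer identity
`[a+1][b] - [a][b+1] = (v^(b-a) - v^(a-b)) / (v - v⁻¹)` together with `t^(-2n) = t^(2n)`
identifies this with the eigenvalue of `(K - K⁻¹) / (v - v⁻¹)`.
-/
noncomputable section

/-- The quantum integer `[n]_v`. -/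
def qint {F : Type*} [Field F] (v : F) (n : ℕ) : F := (v ^ n - v⁻¹ ^ n) / (v - v⁻¹)

/-- The matrix of `E` on `Λ_d^-`: `E·ξ_r = −t^(r-1) [d+1-r]_v ξ_(r-1)` (with `ξ_(-1) = 0`). -/
def Ematm {F : Type*} [Field F] (v t : F) (d : ℕ) :
    Matrix (Fin (d + 1)) (Fin (d + 1)) F :=
  fun s r => if (r : ℕ) = (s : ℕ) + 1 then -(t ^ (s : ℕ) * qint v (d - (s : ℕ))) else 0

/-- The matrix of `F` on `Λ_d^-`: `F·ξ_r = t^r [r+1]_v ξ_(r+1)` (with `ξ_(d+1) = 0`). -/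
def Fmatm {F : Type*} [Field F] (v t : F) (d : ℕ) :
    Matrix (Fin (d + 1)) (Fin (d + 1)) F :=
  fun s r => if (s : ℕ) = (r : ℕ) + 1 then t ^ (r : ℕ) * qint v ((r : ℕ) + 1) else 0

/-- The matrix of `K` on `Λ_d^-`: `K·ξ_r = −t^(2r) v^(d-2r) ξ_r`. -/
def Kmatm {F : Type*} [Field F] (v t : F) (d : ℕ) :
    Matrix (Fin (d + 1)) (Fin (d + 1)) F :=
  Matrix.diagonal fun r => -(t ^ (2 * (r : ℕ)) * v ^ ((d : ℤ) - 2 * (r : ℕ)))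

/-- The matrix of `K⁻¹` on `Λ_d^-`. -/
def Kinvmatm {F : Type*} [Field F] (v t : F) (d : ℕ) :
    Matrix (Fin (d + 1)) (Fin (d + 1)) F :=
  Matrix.diagonal fun r => (-(t ^ (2 * (r : ℕ)) * v ^ ((d : ℤ) - 2 * (r : ℕ))))⁻¹

open Matrix

theorem Fin.sum_ite_val_eq {M : Type*} [AddCommMonoid M] {n : ℕ} (m : ℕ)
    (f : Fin (n + 1) → M) :
    (∑ j : Fin (n + 1), if (j : ℕ) = m then f j else 0) =
      if h : m < n + 1 then f ⟨m, h⟩ else 0 := by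
  split_ifs with h
  · simp_rw [← Fin.ext_iff (b := ⟨m, h⟩), Finset.sum_ite_eq', Finset.mem_univ, if_true]
  · exact Finset.sum_eq_zero fun j _ => if_neg (by omega)

section
variable {R : Type*} [Semiring R]

def superdiagMatrix (n : ℕ) (b : ℕ → R) : Matrix (Fin (n + 1)) (Fin (n + 1)) R :=
  fun s r => if (r : ℕ) = s + 1 then b s else 0

def subdiagMatrix (n : ℕ) (a : ℕ → R) : Matrix (Fin (n + 1)) (Fin (n + 1)) R :=
  fun s r => if (s : ℕ) = r + 1 then a r else 0

theorem superdiagMatrix_mul_subdiagMatrix {n : ℕ} {b : ℕ → R} (hb : b n = 0) (a : ℕ → R) :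
    superdiagMatrix n b * subdiagMatrix n a = diagonal fun i : Fin (n + 1) => b i * a i := by
  ext s r
  simp only [mul_apply, superdiagMatrix, subdiagMatrix, diagonal_apply, ite_mul, zero_mul,
    mul_ite, mul_zero, Fin.sum_ite_val_eq]
  rcases eq_or_ne s r with rfl | hsr
  · by_cases hs : (s : ℕ) + 1 < n + 1
    · simp [hs]
    · simp [show (s : ℕ) = n by omega, hb]
  · simp [hsr, Ne.symm hsr, Fin.val_inj]

theorem subdiagMatrix_mul_superdiagMatrix {n : ℕ} (a b : ℕ → R) :
    subdiagMatrix n a * superdiagMatrix n b =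
      diagonal fun i : Fin (n + 1) => if (i : ℕ) = 0 then 0 else a (i - 1) * b (i - 1) := by
  ext s r
  simp only [mul_apply, superdiagMatrix, subdiagMatrix, diagonal_apply, ite_mul, zero_mul,
    mul_ite, mul_zero]
  rcases eq_or_ne s r with rfl | hsr
  · by_cases hs : (s : ℕ) = 0
    · simp [hs]
    · have hs' : ∀ j : Fin (n + 1), (s : ℕ) = j + 1 ↔ (j : ℕ) = s - 1 := fun j => by omega
      simp [hs', hs, Fin.sum_ite_val_eq, show (s : ℕ) - 1 < n + 1 by omega]
  · rw [if_neg hsr]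
    refine Finset.sum_eq_zero fun j _ => ?_
    split_ifs with h1 h2
    · exact absurd (Fin.ext (by omega)) hsr
    all_goals rfl

end

section
variable {R : Type*} [CommSemiring R]

theorem diagonal_mul_superdiagMatrix {n : ℕ} {D : ℕ → R} {c : R} (h : ∀ s, D s = c * D (s + 1))
    (b : ℕ → R) :
    diagonal (fun i : Fin (n + 1) => D i) * superdiagMatrix n b =
      c • (superdiagMatrix n b * diagonal fun i : Fin (n + 1) => D i) := by
  ext s r
  simp only [diagonal_mul, mul_diagonal, Matrix.smul_apply, superdiagMatrix, smul_eq_mul]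
  split_ifs with hrs
  · rw [hrs, h]
    ring
  · simp

theorem diagonal_mul_subdiagMatrix {n : ℕ} {D : ℕ → R} {c : R} (h : ∀ r, D (r + 1) = c * D r)
    (a : ℕ → R) :
    diagonal (fun i : Fin (n + 1) => D i) * subdiagMatrix n a =
      c • (subdiagMatrix n a * diagonal fun i : Fin (n + 1) => D i) := by
  ext s r
  simp only [diagonal_mul, mul_diagonal, Matrix.smul_apply, subdiagMatrix, smul_eq_mul]
  split_ifs with hsr
  · rw [hsr, h]
    ring
  · simp
end

section
variable {F : Type*} [Field F]

theorem qint_zero (v : F) : qint v 0 = 0 := by simp [qint]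

theorem qint_succ_mul_sub_mul_succ {v : F} (hv : v ≠ 0) (a b : ℕ) :
    qint v (a + 1) * qint v b - qint v a * qint v (b + 1) =
      (v ^ ((b : ℤ) - a) - v ^ ((a : ℤ) - b)) / (v - v⁻¹) := by
  by_cases hu : v - v⁻¹ = 0
  · simp [qint, hu] -- `v = ±1`: both sides are `x / 0 = 0`
  have hu' : v ^ 2 - 1 ≠ 0 := by
    contrapose! hu
    field_simp
    linear_combination hu
  simp only [qint, zpow_sub₀ hv, zpow_natCast, inv_pow, pow_succ]
  field_simp
  ring

variable (v t : F) (d : ℕ)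

/-- The eigenvalue of `K` on `ξ_n`. -/
def kWeight (n : ℕ) : F := -(t ^ (2 * n) * v ^ ((d : ℤ) - 2 * n))

theorem Kmatm_eq_diagonal : Kmatm v t d = diagonal fun r : Fin (d + 1) => kWeight v t d r := rfl

theorem Kinvmatm_eq_diagonal :
    Kinvmatm v t d = diagonal fun r : Fin (d + 1) => (kWeight v t d r)⁻¹ := rfl

theorem Ematm_eq_superdiagMatrix :
    Ematm v t d = superdiagMatrix d fun s => -(t ^ s * qint v (d - s)) := rfl

theorem Fmatm_eq_subdiagMatrix :
    Fmatm v t d = subdiagMatrix d fun r => t ^ r * qint v (r + 1) := rfl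

variable {v t}

theorem kWeight_ne_zero (ht : t ≠ 0) (hv : v ≠ 0) (n : ℕ) : kWeight v t d n ≠ 0 :=
  neg_ne_zero.mpr (mul_ne_zero (pow_ne_zero _ ht) (zpow_ne_zero _ hv))

theorem kWeight_succ (hv : v ≠ 0) (n : ℕ) :
    kWeight v t d (n + 1) = t ^ 2 / v ^ 2 * kWeight v t d n := by
  have : (d : ℤ) - 2 * ((n + 1 : ℕ) : ℤ) = ((d : ℤ) - 2 * n) - 2 := by push_cast; ring
  rw [kWeight, kWeight, this, zpow_sub₀ hv]
  field_simp
  ring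

theorem kWeight_inv (ht : t ^ 2 = -1) (n : ℕ) :
    (kWeight v t d n)⁻¹ = -(t ^ (2 * n) * v ^ (2 * (n : ℤ) - d)) := by
  rw [kWeight, pow_mul, ht, inv_neg, mul_inv, ← inv_pow, inv_neg, inv_one, ← _root_.zpow_neg,
    neg_sub]

end

section
variable {F : Type*} [Field F] {v t : F} (d : ℕ)

theorem Ematm_mul_Fmatm :
    Ematm v t d * Fmatm v t d =
      diagonal fun i : Fin (d + 1) =>
        -(t ^ (2 * (i : ℕ)) * (qint v (i + 1) * qint v (d - i))) := by
  rw [Ematm_eq_superdiagMatrix, Fmatm_eq_subdiagMatrix,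
    superdiagMatrix_mul_subdiagMatrix (by simp [qint_zero])]
  congr 1
  funext i
  ring

theorem sq_smul_Fmatm_mul_Ematm :
    t ^ 2 • (Fmatm v t d * Ematm v t d) =
      diagonal fun i : Fin (d + 1) =>
        -(t ^ (2 * (i : ℕ)) * (qint v i * qint v (d + 1 - i))) := by
  rw [Ematm_eq_superdiagMatrix, Fmatm_eq_subdiagMatrix, subdiagMatrix_mul_superdiagMatrix,
    ← diagonal_smul]
  congr 1
  funext ⟨i, hi⟩
  cases i with
  | zero => simp [qint_zero]
  | succ m =>
    simp only [Pi.smul_apply, smul_eq_mul, Nat.add_one_ne_zero, if_false, Nat.add_sub_cancel,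
      Nat.add_sub_add_right]
    ring

theorem kWeight_sub_inv_eq (ht : t ^ 2 = -1) (hv : v ≠ 0) {n : ℕ} (hn : n ≤ d) :
    (v - v⁻¹)⁻¹ * (kWeight v t d n - (kWeight v t d n)⁻¹) =
      -(t ^ (2 * n) * (qint v (n + 1) * qint v (d - n)))
        - -(t ^ (2 * n) * (qint v n * qint v (d + 1 - n))) := by
  obtain ⟨b, rfl⟩ := Nat.exists_eq_add_of_le hn
  have hexp : ((n + b : ℕ) : ℤ) - 2 * n = b - n := by push_cast; ring
  have hexp' : 2 * (n : ℤ) - (n + b : ℕ) = n - b := by push_cast; ring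
  rw [kWeight_inv _ ht, kWeight, hexp, hexp', Nat.add_sub_cancel_left,
    show n + b + 1 - n = b + 1 by omega]
  linear_combination t ^ (2 * n) * qint_succ_mul_sub_mul_succ hv n b

end

/-- for every `d ∈ ℕ`, the operators on the `(d+1)`-dimensional space with
basis `ξ_0, …, ξ_d` given by `F·ξ_r = t^r [r+1]_v ξ_(r+1)`, `E·ξ_r = −t^(r-1)[d+1-r]_v ξ_(r-1)`,
`K·ξ_r = −t^(2r) v^(d-2r) ξ_r` satisfy the defining relations of `U`, so the space becomes a
`U`-module (the module `Λ_d^-`). -/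
theorem Lambda_minus_is_U_module {F : Type*} [Field F] (v t : F)
    (ht : t ^ 2 = -1) (hv : v ≠ 0) (d : ℕ) :
    Kmatm v t d * Kinvmatm v t d = 1 ∧
    Kinvmatm v t d * Kmatm v t d = 1 ∧
    Kmatm v t d * Ematm v t d = (v ^ 2 / t ^ 2) • (Ematm v t d * Kmatm v t d) ∧
    Kmatm v t d * Fmatm v t d = (t ^ 2 / v ^ 2) • (Fmatm v t d * Kmatm v t d) ∧
    Ematm v t d * Fmatm v t d - t ^ 2 • (Fmatm v t d * Ematm v t d)
      = (v - v⁻¹)⁻¹ • (Kmatm v t d - Kinvmatm v t d) := by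
  have ht0 : t ≠ 0 := by
    rintro rfl
    norm_num at ht
  have hK := kWeight_ne_zero d ht0 hv
  refine ⟨?_, ?_, ?_, ?_, ?_⟩
  · rw [Kmatm_eq_diagonal, Kinvmatm_eq_diagonal, diagonal_mul_diagonal]
    simp [hK]
  · rw [Kmatm_eq_diagonal, Kinvmatm_eq_diagonal, diagonal_mul_diagonal]
    simp [hK]
  · rw [Kmatm_eq_diagonal, Ematm_eq_superdiagMatrix]
    refine diagonal_mul_superdiagMatrix (fun s => ?_) _
    rw [kWeight_succ d hv]
    field_simp
  · rw [Kmatm_eq_diagonal, Fmatm_eq_subdiagMatrix]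
    exact diagonal_mul_subdiagMatrix (kWeight_succ d hv) _
  · rw [Ematm_mul_Fmatm, sq_smul_Fmatm_mul_Ematm, Kmatm_eq_diagonal, Kinvmatm_eq_diagonal,
      diagonal_sub, diagonal_sub, ← diagonal_smul]
    congr 1
    funext i
    exact (kWeight_sub_inv_eq d ht hv (Nat.lt_succ_iff.mp i.isLt)).symm
end
end

section
/- In the q-Schur algebra S_{v,t}(2,d+2) and S_{v,t}(2,d), the assignments ψ(E_{r,r+1}) = t E_{r-1,r}, ψ(F_{r,r-1}) = t F_{r-1,r-2}, ψ(1_r) = 1_{r-1} (with 1 ≤ r ≤ d+1, and images zero otherwise) define a surjective algebra homomorphism ψ_{d,d+2}: S_{v,t}(2,d+2) → S_{v,t}(2,d); in particular ψ maps the relation E_{r,r+1}F_{r+1,r} − t^2 F_{r,r-1}E_{r-1,r} = t^{2r}[d+2−2r]_v 1_r of S_{v,t}(2,d+2) to a valid relation in S_{v,t}(2,d). -/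
noncomputable section

/-- The quantum integer `[a]_v` for an integer `a`. -/
def qintz {F : Type*} [Field F] (v : F) (a : ℤ) : F := (v ^ a - v ^ (-a)) / (v - v⁻¹)

/-- The defining relations of the `q`-Schur algebra `S_{v,t}(2,d)`:
generators `1_r = ι (0,r)`, `E_{r,r+1} = ι (1,r)`, `F_{r,r-1} = ι (2,r)`
(out-of-range generators being zero), with the relations of Lemma 3.3:
orthogonal idempotents, idempotent compatibility, and
`E_{r,r+1}F_{r+1,r} − t² F_{r,r-1}E_{r-1,r} = t^(2r)[d−2r]_v 1_r`. -/
inductive SRel (F : Type) [Field F] (v t : F) (d : ℕ) :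
    FreeAlgebra F (Fin 3 × ℕ) → FreeAlgebra F (Fin 3 × ℕ) → Prop
  | one_zero (r : ℕ) (h : d < r) : SRel F v t d (FreeAlgebra.ι F ((0 : Fin 3), r)) 0
  | E_zero (r : ℕ) (h : d ≤ r) : SRel F v t d (FreeAlgebra.ι F ((1 : Fin 3), r)) 0
  | F_zero_lo : SRel F v t d (FreeAlgebra.ι F ((2 : Fin 3), 0)) 0
  | F_zero_hi (r : ℕ) (h : d < r) : SRel F v t d (FreeAlgebra.ι F ((2 : Fin 3), r)) 0
  | one_one (r r' : ℕ) :
      SRel F v t d (FreeAlgebra.ι F ((0 : Fin 3), r) * FreeAlgebra.ι F ((0 : Fin 3), r'))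
        (if r = r' then FreeAlgebra.ι F ((0 : Fin 3), r) else 0)
  | E_one (r r' : ℕ) :
      SRel F v t d (FreeAlgebra.ι F ((1 : Fin 3), r) * FreeAlgebra.ι F ((0 : Fin 3), r'))
        (if r' = r + 1 then FreeAlgebra.ι F ((1 : Fin 3), r) else 0)
  | one_E (r r' : ℕ) :
      SRel F v t d (FreeAlgebra.ι F ((0 : Fin 3), r') * FreeAlgebra.ι F ((1 : Fin 3), r))
        (if r' = r then FreeAlgebra.ι F ((1 : Fin 3), r) else 0)
  | F_one (r r' : ℕ) :
      SRel F v t d (FreeAlgebra.ι F ((2 : Fin 3), r) * FreeAlgebra.ι F ((0 : Fin 3), r'))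
        (if r' + 1 = r then FreeAlgebra.ι F ((2 : Fin 3), r) else 0)
  | one_F (r r' : ℕ) :
      SRel F v t d (FreeAlgebra.ι F ((0 : Fin 3), r') * FreeAlgebra.ι F ((2 : Fin 3), r))
        (if r' = r then FreeAlgebra.ι F ((2 : Fin 3), r) else 0)
  | comm (r : ℕ) (h : r ≤ d) :
      SRel F v t d
        (FreeAlgebra.ι F ((1 : Fin 3), r) * FreeAlgebra.ι F ((2 : Fin 3), r + 1)
          - t ^ 2 • (FreeAlgebra.ι F ((2 : Fin 3), r) * FreeAlgebra.ι F ((1 : Fin 3), r - 1)))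
        ((t ^ (2 * r) * qintz v ((d : ℤ) - 2 * (r : ℤ))) • FreeAlgebra.ι F ((0 : Fin 3), r))

/-- The `q`-Schur algebra `S_{v,t}(2,d)`, presented by generators and relations. -/
abbrev SchurS (F : Type) [Field F] (v t : F) (d : ℕ) := RingQuot (SRel F v t d)

/-- The idempotent generator `1_r` of `S_{v,t}(2,d)`. -/
def Sone (F : Type) [Field F] (v t : F) (d : ℕ) (r : ℕ) : SchurS F v t d :=
  RingQuot.mkAlgHom F (SRel F v t d) (FreeAlgebra.ι F ((0 : Fin 3), r))

/-- The generator `E_{r,r+1}` of `S_{v,t}(2,d)`. -/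
def SE (F : Type) [Field F] (v t : F) (d : ℕ) (r : ℕ) : SchurS F v t d :=
  RingQuot.mkAlgHom F (SRel F v t d) (FreeAlgebra.ι F ((1 : Fin 3), r))

/-- The generator `F_{r,r-1}` of `S_{v,t}(2,d)`. -/
def SF (F : Type) [Field F] (v t : F) (d : ℕ) (r : ℕ) : SchurS F v t d :=
  RingQuot.mkAlgHom F (SRel F v t d) (FreeAlgebra.ι F ((2 : Fin 3), r))

section Helpers

variable (F : Type) [Field F] (v t : F) (d : ℕ)

lemma Sone_zero {r : ℕ} (h : d < r) : Sone F v t d r = 0 := by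
  simpa [Sone] using RingQuot.mkAlgHom_rel F (SRel.one_zero (F := F) (v := v) (t := t) r h)

lemma SE_zero {r : ℕ} (h : d ≤ r) : SE F v t d r = 0 := by
  simpa [SE] using RingQuot.mkAlgHom_rel F (SRel.E_zero (F := F) (v := v) (t := t) r h)

lemma SF_zero_lo : SF F v t d 0 = 0 := by
  simpa [SF] using RingQuot.mkAlgHom_rel F (SRel.F_zero_lo (F := F) (v := v) (t := t) (d := d))

lemma SF_zero_hi {r : ℕ} (h : d < r) : SF F v t d r = 0 := by
  simpa [SF] using RingQuot.mkAlgHom_rel F (SRel.F_zero_hi (F := F) (v := v) (t := t) r h)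

lemma Sone_mul_Sone (r r' : ℕ) :
    Sone F v t d r * Sone F v t d r' = if r = r' then Sone F v t d r else 0 := by
  have := RingQuot.mkAlgHom_rel F (SRel.one_one (F := F) (v := v) (t := t) (d := d) r r')
  simp only [map_mul, apply_ite (RingQuot.mkAlgHom F (SRel F v t d)), map_zero] at this
  simpa [Sone] using this

lemma SE_mul_Sone (r r' : ℕ) :
    SE F v t d r * Sone F v t d r' = if r' = r + 1 then SE F v t d r else 0 := by
  have := RingQuot.mkAlgHom_rel F (SRel.E_one (F := F) (v := v) (t := t) (d := d) r r')
  simp only [map_mul, apply_ite (RingQuot.mkAlgHom F (SRel F v t d)), map_zero] at this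
  simpa [Sone, SE] using this

lemma Sone_mul_SE (r r' : ℕ) :
    Sone F v t d r' * SE F v t d r = if r' = r then SE F v t d r else 0 := by
  have := RingQuot.mkAlgHom_rel F (SRel.one_E (F := F) (v := v) (t := t) (d := d) r r')
  simp only [map_mul, apply_ite (RingQuot.mkAlgHom F (SRel F v t d)), map_zero] at this
  simpa [Sone, SE] using this

lemma SF_mul_Sone (r r' : ℕ) :
    SF F v t d r * Sone F v t d r' = if r' + 1 = r then SF F v t d r else 0 := by
  have := RingQuot.mkAlgHom_rel F (SRel.F_one (F := F) (v := v) (t := t) (d := d) r r')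
  simp only [map_mul, apply_ite (RingQuot.mkAlgHom F (SRel F v t d)), map_zero] at this
  simpa [Sone, SF] using this

lemma Sone_mul_SF (r r' : ℕ) :
    Sone F v t d r' * SF F v t d r = if r' = r then SF F v t d r else 0 := by
  have := RingQuot.mkAlgHom_rel F (SRel.one_F (F := F) (v := v) (t := t) (d := d) r r')
  simp only [map_mul, apply_ite (RingQuot.mkAlgHom F (SRel F v t d)), map_zero] at this
  simpa [Sone, SF] using this

lemma Scomm {r : ℕ} (h : r ≤ d) :
    SE F v t d r * SF F v t d (r + 1) - t ^ 2 • (SF F v t d r * SE F v t d (r - 1)) =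
      (t ^ (2 * r) * qintz v ((d : ℤ) - 2 * (r : ℤ))) • Sone F v t d r := by
  have := RingQuot.mkAlgHom_rel F (SRel.comm (F := F) (v := v) (t := t) (d := d) r h)
  simp only [map_sub, map_mul, map_smul] at this
  simpa [Sone, SE, SF] using this

/-- The target values of the lift on generators. -/
def gmap : Fin 3 × ℕ → SchurS F v t d := fun p =>
  if p.1 = 0 then (if p.2 = 0 then 0 else Sone F v t d (p.2 - 1))
  else if p.1 = 1 then (if p.2 = 0 then 0 else t • SE F v t d (p.2 - 1))
  else (if p.2 = 0 then 0 else t • SF F v t d (p.2 - 1))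

lemma gmap_zero (r : ℕ) :
    gmap F v t d ((0 : Fin 3), r) = if r = 0 then 0 else Sone F v t d (r - 1) := by
  simp [gmap]

lemma gmap_one (r : ℕ) :
    gmap F v t d ((1 : Fin 3), r) = if r = 0 then 0 else t • SE F v t d (r - 1) := by
  simp [gmap, show (1 : Fin 3) ≠ 0 by decide]

lemma gmap_two (r : ℕ) :
    gmap F v t d ((2 : Fin 3), r) = if r = 0 then 0 else t • SF F v t d (r - 1) := by
  simp [gmap, show (2 : Fin 3) ≠ 0 by decide, show (2 : Fin 3) ≠ 1 by decide]

end Helpers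

/-- the assignments `ψ(E_{r,r+1}) = t E_{r-1,r}`, `ψ(F_{r,r-1}) = t F_{r-1,r-2}`,
`ψ(1_r) = 1_{r-1}` (with images zero for `r = 0`, and automatically zero out of range)
define a surjective algebra homomorphism `ψ_{d,d+2} : S_{v,t}(2,d+2) → S_{v,t}(2,d)`. -/
theorem psi_surjective_hom (F : Type) [Field F] (v t : F)
    (ht : t ^ 2 = -1) (hv : v ≠ 0) (d : ℕ) :
    ∃ ψ : SchurS F v t (d + 2) →ₐ[F] SchurS F v t d,
      Function.Surjective ψ ∧
      (∀ r : ℕ, ψ (SE F v t (d + 2) r) = if r = 0 then 0 else t • SE F v t d (r - 1)) ∧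
      (∀ r : ℕ, ψ (SF F v t (d + 2) r) = if r = 0 then 0 else t • SF F v t d (r - 1)) ∧
      (∀ r : ℕ, ψ (Sone F v t (d + 2) r) = if r = 0 then 0 else Sone F v t d (r - 1)) := by
  have ht0 : t ≠ 0 := by
    intro h; rw [h] at ht; norm_num at ht
  set f : FreeAlgebra F (Fin 3 × ℕ) →ₐ[F] SchurS F v t d :=
    FreeAlgebra.lift F (gmap F v t d) with hf
  have hfι : ∀ p, f (FreeAlgebra.ι F p) = gmap F v t d p := fun p =>
    FreeAlgebra.lift_ι_apply _ _
  have hrel : ∀ ⦃x y⦄, SRel F v t (d + 2) x y → f x = f y := by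
    intro x y h
    induction h with
    | one_zero r h =>
      rw [hfι, gmap_zero, map_zero, if_neg (by omega : ¬ r = 0), Sone_zero F v t d (by omega)]
    | E_zero r h =>
      rw [hfι, gmap_one, map_zero, if_neg (by omega : ¬ r = 0), SE_zero F v t d (by omega),
        smul_zero]
    | F_zero_lo =>
      rw [hfι, gmap_two, map_zero, if_pos rfl]
    | F_zero_hi r h =>
      rw [hfι, gmap_two, map_zero, if_neg (by omega : ¬ r = 0), SF_zero_hi F v t d (by omega),
        smul_zero]
    | one_one r r' =>
      simp only [map_mul, apply_ite f, map_zero, hfι, gmap_zero]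
      rcases r with _ | r <;> rcases r' with _ | r'
      · simp
      · simp
      · simp
      · simp only [if_neg (by omega : ¬ r + 1 = 0), if_neg (by omega : ¬ r' + 1 = 0),
          Nat.add_sub_cancel, Sone_mul_Sone]
        by_cases h : r = r'
        · simp [h]
        · rw [if_neg h, if_neg (by omega : ¬ r + 1 = r' + 1)]
    | E_one r r' =>
      simp only [map_mul, apply_ite f, map_zero, hfι, gmap_zero, gmap_one]
      rcases r with _ | r <;> rcases r' with _ | r'
      · simp
      · simp
      · simp
      · simp only [if_neg (by omega : ¬ r + 1 = 0), if_neg (by omega : ¬ r' + 1 = 0),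
          Nat.add_sub_cancel, smul_mul_assoc, SE_mul_Sone, smul_ite, smul_zero]
        by_cases h : r' = r + 1
        · rw [if_pos h, if_pos (by omega : r' + 1 = r + 1 + 1)]
        · rw [if_neg h, if_neg (by omega : ¬ r' + 1 = r + 1 + 1)]
    | one_E r r' =>
      simp only [map_mul, apply_ite f, map_zero, hfι, gmap_zero, gmap_one]
      rcases r' with _ | r' <;> rcases r with _ | r
      · simp
      · simp
      · simp
      · simp only [if_neg (by omega : ¬ r + 1 = 0), if_neg (by omega : ¬ r' + 1 = 0),
          Nat.add_sub_cancel, mul_smul_comm, Sone_mul_SE, smul_ite, smul_zero]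
        by_cases h : r' = r
        · rw [if_pos h, if_pos (by omega : r' + 1 = r + 1)]
        · rw [if_neg h, if_neg (by omega : ¬ r' + 1 = r + 1)]
    | F_one r r' =>
      simp only [map_mul, apply_ite f, map_zero, hfι, gmap_zero, gmap_two]
      rcases r with _ | r <;> rcases r' with _ | r'
      · simp
      · simp
      · rcases r with _ | r
        · simp [SF_zero_lo]
        · simp
      · simp only [if_neg (by omega : ¬ r + 1 = 0), if_neg (by omega : ¬ r' + 1 = 0),
          Nat.add_sub_cancel, smul_mul_assoc, SF_mul_Sone, smul_ite, smul_zero]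
        by_cases h : r' + 1 = r
        · rw [if_pos h, if_pos (by omega : r' + 1 + 1 = r + 1)]
        · rw [if_neg h, if_neg (by omega : ¬ r' + 1 + 1 = r + 1)]
    | one_F r r' =>
      simp only [map_mul, apply_ite f, map_zero, hfι, gmap_zero, gmap_two]
      rcases r' with _ | r' <;> rcases r with _ | r
      · simp
      · simp
      · simp
      · simp only [if_neg (by omega : ¬ r + 1 = 0), if_neg (by omega : ¬ r' + 1 = 0),
          Nat.add_sub_cancel, mul_smul_comm, Sone_mul_SF, smul_ite, smul_zero]
        by_cases h : r' = r
        · rw [if_pos h, if_pos (by omega : r' + 1 = r + 1)]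
        · rw [if_neg h, if_neg (by omega : ¬ r' + 1 = r + 1)]
    | comm r h =>
      simp only [map_sub, map_smul, map_mul, hfι, gmap_zero, gmap_one, gmap_two]
      match r, h with
      | 0, h => simp
      | 1, h =>
        have hc := Scomm F v t d (Nat.zero_le d)
        rw [SF_zero_lo, zero_mul, smul_zero, sub_zero] at hc
        have harg : (d : ℤ) - 2 * ((0 : ℕ) : ℤ) = ((d + 2 : ℕ) : ℤ) - 2 * ((1 : ℕ) : ℤ) := by
          push_cast; ring
        simp only [if_neg (by omega : ¬ (1 : ℕ) = 0), if_neg (by omega : ¬ (1 : ℕ) + 1 = 0),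
          show (1 : ℕ) - 1 = 0 by omega, eq_self_iff_true, if_true,
          Nat.add_sub_cancel, mul_zero, smul_zero, sub_zero]
        rw [smul_mul_smul_comm, hc, smul_smul, harg]
        congr 1
        ring
      | (s + 2), h =>
        have harg : (d : ℤ) - 2 * ((s + 1 : ℕ) : ℤ) = ((d + 2 : ℕ) : ℤ) - 2 * ((s + 2 : ℕ) : ℤ) := by
          push_cast; ring
        simp only [if_neg (by omega : ¬ s + 2 = 0), if_neg (by omega : ¬ s + 2 + 1 = 0),
          if_neg (by omega : ¬ s + 2 - 1 = 0), if_neg (by omega : ¬ s + 1 = 0),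
          Nat.add_sub_cancel, show s + 2 - 1 = s + 1 by omega, show s + 1 - 1 = s by omega]
        by_cases hs : s + 1 ≤ d
        · have hc := Scomm F v t d hs
          rw [show s + 1 - 1 = s by omega, show s + 1 + 1 = s + 2 by omega] at hc
          have hc2 := congrArg (fun z => (t * t) • z) hc
          simp only [smul_sub, smul_smul] at hc2
          rw [smul_mul_smul_comm, smul_mul_smul_comm, smul_comm (t ^ 2) (t * t),
            smul_smul (t * t) (t ^ 2), hc2, harg]
          congr 1
          ring
        · have h1 : SE F v t d (s + 1) = 0 := SE_zero F v t d (by omega)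
          have h2 : SF F v t d (s + 1) = 0 := SF_zero_hi F v t d (by omega)
          have h3 : Sone F v t d (s + 1) = 0 := Sone_zero F v t d (by omega)
          simp [h1, h2, h3]
  refine ⟨RingQuot.liftAlgHom F ⟨f, hrel⟩, ?_, ?_, ?_, ?_⟩
  · -- surjectivity
    have key : ∀ y : FreeAlgebra F (Fin 3 × ℕ),
        ∃ x, RingQuot.liftAlgHom F ⟨f, hrel⟩ x = RingQuot.mkAlgHom F (SRel F v t d) y := by
      intro y
      induction y using FreeAlgebra.induction with
      | grade0 a =>
        exact ⟨algebraMap F _ a, by rw [AlgHom.commutes, AlgHom.commutes]⟩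
      | grade1 p =>
        obtain ⟨i, r⟩ := p
        fin_cases i
        · refine ⟨Sone F v t (d + 2) (r + 1), ?_⟩
          rw [Sone, RingQuot.liftAlgHom_mkAlgHom_apply, hfι, gmap_zero,
            if_neg (Nat.succ_ne_zero r), Nat.add_sub_cancel]
          rfl
        · refine ⟨t⁻¹ • SE F v t (d + 2) (r + 1), ?_⟩
          rw [map_smul, SE, RingQuot.liftAlgHom_mkAlgHom_apply, hfι, gmap_one,
            if_neg (Nat.succ_ne_zero r), Nat.add_sub_cancel, smul_smul,
            inv_mul_cancel₀ ht0, one_smul]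
          rfl
        · refine ⟨t⁻¹ • SF F v t (d + 2) (r + 1), ?_⟩
          rw [map_smul, SF, RingQuot.liftAlgHom_mkAlgHom_apply, hfι, gmap_two,
            if_neg (Nat.succ_ne_zero r), Nat.add_sub_cancel, smul_smul,
            inv_mul_cancel₀ ht0, one_smul]
          rfl
      | mul x y hx hy =>
        obtain ⟨a, ha⟩ := hx; obtain ⟨b, hb⟩ := hy
        exact ⟨a * b, by rw [map_mul, ha, hb, map_mul]⟩
      | add x y hx hy =>
        obtain ⟨a, ha⟩ := hx; obtain ⟨b, hb⟩ := hy
        exact ⟨a + b, by rw [map_add, ha, hb, map_add]⟩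
    intro x
    obtain ⟨y, rfl⟩ := RingQuot.mkAlgHom_surjective F (SRel F v t d) x
    exact key y
  · intro r
    rw [SE, RingQuot.liftAlgHom_mkAlgHom_apply, hfι, gmap_one]
  · intro r
    rw [SF, RingQuot.liftAlgHom_mkAlgHom_apply, hfι, gmap_two]
  · intro r
    rw [Sone, RingQuot.liftAlgHom_mkAlgHom_apply, hfι, gmap_zero]
end
end
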